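/- arXiv:2503.01320 — 4 statements merged into one kernel-verified Lean document; each statement's English description precedes it below -/
import Mathlib

section
/- For any r ∈ (0,1) and 1 ≥ z₁ ≥ z₂ ≥ 0, ∫₀¹ |m_{r,u}(z₁) − m_{r,u}(z₂) − z₁ + z₂| du ≤ (4r/(1−r)²)·(z₁ − z₂). -/
open Set MeasureTheory

/-- `m_{r,u}(z)` : the median of `(z-r)/(1-r)`, `z/(1-r)` and `u`. -/
noncomputable def mFun (r u z : ℝ) : ℝ :=
  max (min ((z - r) / (1 - r)) (z / (1 - r)))
    (min (max ((z - r) / (1 - r)) (z / (1 - r))) u)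

private lemma final_aux (r z₁ z₂ : ℝ) (hr0 : 0 < r) (hr1 : r < 1)
  (h2 : 0 ≤ z₂) (h21 : z₂ ≤ z₁) (h1 : z₁ ≤ 1) : r*(z₁-z₂)/(1-r) + (z₁/(1-r) - (z₂-r)/(1-r)) * (min (z₁-z₂) r/(1-r))
    ≤ 4*r/(1-r)^2*(z₁-z₂) := by
  have hs0 : (0:ℝ) < 1 - r := by linarith
  have hd0 : (0:ℝ) ≤ z₁ - z₂ := by linarith
  have e : r*(z₁-z₂)/(1-r) + (z₁/(1-r) - (z₂-r)/(1-r)) * (min (z₁-z₂) r/(1-r))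
      = (r*(z₁-z₂)*(1-r) + (z₁-z₂+r) * min (z₁-z₂) r)/(1-r)^2 := by
    field_simp; ring
  have e2 : 4*r/(1-r)^2*(z₁-z₂) = (4*(r*(z₁-z₂)))/(1-r)^2 := by ring
  rw [e, e2]
  apply (div_le_div_iff_of_pos_right (by positivity)).mpr
  rcases le_total (z₁-z₂) r with hm | hm
  · rw [min_eq_left hm]
    nlinarith [mul_nonneg hr0.le hd0, mul_nonneg (mul_nonneg hr0.le hd0) hr0.le, mul_nonneg hd0 (sub_nonneg.2 hm)]
  · rw [min_eq_right hm]
    nlinarith [mul_nonneg hr0.le hd0, mul_nonneg (mul_nonneg hr0.le hd0) hr0.le, mul_nonneg hr0.le (sub_nonneg.2 hm)]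

theorem stmt1 (r z₁ z₂ : ℝ) (hr : r ∈ Ioo (0:ℝ) 1)
    (h2 : 0 ≤ z₂) (h21 : z₂ ≤ z₁) (h1 : z₁ ≤ 1) :
    ∫ u in Ioo (0:ℝ) 1, |mFun r u z₁ - mFun r u z₂ - z₁ + z₂|
      ≤ 4 * r / (1 - r) ^ 2 * (z₁ - z₂) := by
  obtain ⟨hr0, hr1⟩ := hr
  have hs0 : (0:ℝ) < 1 - r := by linarith
  have hd0 : (0:ℝ) ≤ z₁ - z₂ := by linarith
  have hmeq : ∀ z u : ℝ, mFun r u z = max ((z - r)/(1-r)) (min (z/(1-r)) u) := by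
    intro z u
    have hab : (z - r)/(1-r) ≤ z/(1-r) := by
      exact (div_le_div_iff_of_pos_right hs0).mpr (by linarith)
    rw [mFun, min_eq_left hab, max_eq_right hab]
  have hbound : ∀ u : ℝ, |mFun r u z₁ - mFun r u z₂ - z₁ + z₂|
      ≤ r*(z₁-z₂)/(1-r)
        + (Ioo ((z₂-r)/(1-r)) (z₁/(1-r))).indicator
            (fun _ => min (z₁-z₂) r/(1-r)) u := by
    intro u
    rw [hmeq z₁ u, hmeq z₂ u]
    have hA : (z₂-r)/(1-r) ≤ (z₁-r)/(1-r) := (div_le_div_iff_of_pos_right hs0).mpr (by linarith)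
    have hB : z₂/(1-r) ≤ z₁/(1-r) := (div_le_div_iff_of_pos_right hs0).mpr h21
    have hab1 : (z₁-r)/(1-r) ≤ z₁/(1-r) := (div_le_div_iff_of_pos_right hs0).mpr (by linarith)
    have hab2 : (z₂-r)/(1-r) ≤ z₂/(1-r) := (div_le_div_iff_of_pos_right hs0).mpr (by linarith)
    have hc0 : (0:ℝ) ≤ (z₁-z₂)/(1-r) := by positivity
    have e1 : (z₁-r)/(1-r) = (z₂-r)/(1-r) + (z₁-z₂)/(1-r) := by
      rw [← add_div]; congr 1; ring
    have e2 : z₁/(1-r) = z₂/(1-r) + (z₁-z₂)/(1-r) := by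
      rw [← add_div]; congr 1; ring
    have hupper : max ((z₁-r)/(1-r)) (min (z₁/(1-r)) u)
        ≤ max ((z₂-r)/(1-r)) (min (z₂/(1-r)) u) + (z₁-z₂)/(1-r) := by
      rw [e1, e2]
      calc max ((z₂-r)/(1-r) + (z₁-z₂)/(1-r)) (min (z₂/(1-r) + (z₁-z₂)/(1-r)) u)
          ≤ max ((z₂-r)/(1-r) + (z₁-z₂)/(1-r)) (min (z₂/(1-r) + (z₁-z₂)/(1-r)) (u + (z₁-z₂)/(1-r))) :=
            max_le_max le_rfl (min_le_min le_rfl (by linarith))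
        _ = max ((z₂-r)/(1-r)) (min (z₂/(1-r)) u) + (z₁-z₂)/(1-r) := by
            rw [min_add_add_right, max_add_add_right]
    have hmono : max ((z₂-r)/(1-r)) (min (z₂/(1-r)) u)
        ≤ max ((z₁-r)/(1-r)) (min (z₁/(1-r)) u) :=
      max_le_max hA (min_le_min hB le_rfl)
    have hlow : (z₁-r)/(1-r) - z₂/(1-r)
        ≤ max ((z₁-r)/(1-r)) (min (z₁/(1-r)) u) - max ((z₂-r)/(1-r)) (min (z₂/(1-r)) u) :=
      sub_le_sub (le_max_left _ _) (max_le hab2 (min_le_left _ _))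
    have hCd : (z₁-z₂)/(1-r) - (z₁-z₂) = r*(z₁-z₂)/(1-r) := by
      field_simp; ring
    by_cases hu : u ∈ Ioo ((z₂-r)/(1-r)) (z₁/(1-r))
    · rw [indicator_of_mem hu]
      have hE0 : (0:ℝ) ≤ min (z₁-z₂) r/(1-r) := div_nonneg (le_min hd0 hr0.le) hs0.le
      have hC0 : (0:ℝ) ≤ r*(z₁-z₂)/(1-r) := by positivity
      rw [abs_le]
      constructor
      · rcases le_total (z₁-z₂) r with hm | hm
        · rw [min_eq_left hm]
          have hdd : z₁ - z₂ ≤ (z₁-z₂)/(1-r) := by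
            rw [le_div_iff₀ hs0]; nlinarith
          nlinarith [hmono]
        · rw [min_eq_right hm]
          have key : -(r/(1-r)) ≤ (z₁-r)/(1-r) - z₂/(1-r) - (z₁-z₂) := by
            have h3 : (z₁-r)/(1-r) - z₂/(1-r) - (z₁-z₂) = (r*(z₁-z₂) - r)/(1-r) := by
              field_simp; ring
            rw [h3, neg_le, ← neg_div]
            exact (div_le_div_iff_of_pos_right hs0).mpr (by nlinarith [mul_nonneg hr0.le hd0])
          nlinarith [hlow]
      · nlinarith [hupper, mul_le_of_le_one_left hd0 hr1.le]
    · rw [indicator_of_notMem hu, add_zero]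
      rw [mem_Ioo, not_and_or, not_lt, not_lt] at hu
      rcases hu with hu | hu
      · have m2 : max ((z₂-r)/(1-r)) (min (z₂/(1-r)) u) = (z₂-r)/(1-r) := by
          rw [min_eq_right (le_trans hu hab2), max_eq_left hu]
        have m1 : max ((z₁-r)/(1-r)) (min (z₁/(1-r)) u) = (z₁-r)/(1-r) := by
          rw [min_eq_right (le_trans hu (le_trans hA hab1)), max_eq_left (le_trans hu hA)]
        rw [m1, m2]
        have h4 : (z₁-r)/(1-r) - (z₂-r)/(1-r) - z₁ + z₂ = r*(z₁-z₂)/(1-r) := by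
          field_simp; ring
        rw [h4, abs_of_nonneg (by positivity)]
      · have m1 : max ((z₁-r)/(1-r)) (min (z₁/(1-r)) u) = z₁/(1-r) := by
          rw [min_eq_left hu, max_eq_right hab1]
        have m2 : max ((z₂-r)/(1-r)) (min (z₂/(1-r)) u) = z₂/(1-r) := by
          rw [min_eq_left (le_trans hB hu), max_eq_right hab2]
        rw [m1, m2]
        have h4 : z₁/(1-r) - z₂/(1-r) - z₁ + z₂ = r*(z₁-z₂)/(1-r) := by
          field_simp; ring
        rw [h4, abs_of_nonneg (by positivity)]
  -- integrability
  have hcont : Continuous fun u => |mFun r u z₁ - mFun r u z₂ - z₁ + z₂| := by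
    unfold mFun; fun_prop
  have hint_f : IntegrableOn (fun u => |mFun r u z₁ - mFun r u z₂ - z₁ + z₂|) (Ioo 0 1) :=
    hcont.integrableOn_Icc.mono_set Ioo_subset_Icc_self
  have hint_c : IntegrableOn (fun _ : ℝ => r*(z₁-z₂)/(1-r)) (Ioo (0:ℝ) 1) :=
    integrableOn_const measure_Ioo_lt_top.ne (by simp)
  have hint_i : IntegrableOn
      ((Ioo ((z₂-r)/(1-r)) (z₁/(1-r))).indicator (fun _ => min (z₁-z₂) r/(1-r))) (Ioo (0:ℝ) 1) :=
    (integrableOn_const measure_Ioo_lt_top.ne (by simp)).indicator measurableSet_Ioo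
  have hmono2 := setIntegral_mono_on hint_f (hint_c.add hint_i) measurableSet_Ioo
    (fun u _ => hbound u)
  simp only [Pi.add_apply] at hmono2
  rw [integral_add hint_c hint_i, setIntegral_const,
    setIntegral_indicator measurableSet_Ioo, setIntegral_const] at hmono2
  have hvol1 : (volume (Ioo (0:ℝ) 1)).toReal = 1 := by
    simp [Real.volume_Ioo]
  have hE0 : (0:ℝ) ≤ min (z₁-z₂) r/(1-r) := div_nonneg (le_min hd0 hr0.le) hs0.le
  have hvol2 : (volume (Ioo (0:ℝ) 1 ∩ Ioo ((z₂-r)/(1-r)) (z₁/(1-r)))).toReal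
      ≤ z₁/(1-r) - (z₂-r)/(1-r) := by
    have h1 : volume (Ioo (0:ℝ) 1 ∩ Ioo ((z₂-r)/(1-r)) (z₁/(1-r)))
        ≤ ENNReal.ofReal (z₁/(1-r) - (z₂-r)/(1-r)) := by
      rw [← Real.volume_Ioo]; exact measure_mono inter_subset_right
    have hL0 : (0:ℝ) ≤ z₁/(1-r) - (z₂-r)/(1-r) := by
      rw [div_sub_div_same]; exact div_nonneg (by linarith) hs0.le
    calc (volume (Ioo (0:ℝ) 1 ∩ Ioo ((z₂-r)/(1-r)) (z₁/(1-r)))).toReal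
        ≤ (ENNReal.ofReal (z₁/(1-r) - (z₂-r)/(1-r))).toReal :=
          ENNReal.toReal_mono ENNReal.ofReal_ne_top h1
      _ = z₁/(1-r) - (z₂-r)/(1-r) := ENNReal.toReal_ofReal hL0
  rw [measureReal_def, hvol1, smul_eq_mul, one_mul, smul_eq_mul, measureReal_def] at hmono2
  calc ∫ u in Ioo (0:ℝ) 1, |mFun r u z₁ - mFun r u z₂ - z₁ + z₂|
      ≤ r*(z₁-z₂)/(1-r)
        + (volume (Ioo (0:ℝ) 1 ∩ Ioo ((z₂-r)/(1-r)) (z₁/(1-r)))).toReal * (min (z₁-z₂) r/(1-r)) := hmono2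
    _ ≤ r*(z₁-z₂)/(1-r) + (z₁/(1-r) - (z₂-r)/(1-r)) * (min (z₁-z₂) r/(1-r)) := by
        gcongr
    _ ≤ 4*r/(1-r)^2*(z₁-z₂) := final_aux r z₁ z₂ hr0 hr1 h2 h21 h1
    _ = 4 * r / (1 - r) ^ 2 * (z₁ - z₂) := by ring
end

section
/- There is a constant C > 0 such that for every M > 0, a ∈ (0,1), and r ∈ (0, min(a, 1/2)), one has ((a−r)/(1−r))·(f_M((a−r)/(1−r)) − f_M(a)) ≤ C·r, where f_M(x) := −log(max(x, e^{−M})). -/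
open Set

/-- `f_M(x) = -log(max(x, e^{-M}))`. -/
noncomputable def fM (M x : ℝ) : ℝ := -Real.log (max x (Real.exp (-M)))

open Real

/-! With `b = (a - r)/(1 - r) ≤ a`, `A = max a e^{-M}` and `B = max b e^{-M}`, the bound
`log t ≤ t - 1` at `t = A / B` gives `b (f_M b - f_M a) ≤ B (log A - log B) ≤ A - B`.
Since `x ↦ max x e^{-M}` is 1-Lipschitz, `A - B ≤ a - b = r (1 - a)/(1 - r) ≤ 2r`. -/

lemma mul_log_sub_log_le {x y : ℝ} (hx : 0 < x) (hy : 0 < y) :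
    y * (log x - log y) ≤ x - y := by
  rw [← log_div hx.ne' hy.ne']
  calc y * log (x / y) ≤ y * (x / y - 1) :=
        mul_le_mul_of_nonneg_left (log_le_sub_one_of_pos (by positivity)) hy.le
    _ = x - y := by field_simp

lemma fM_sub_fM (M x y : ℝ) :
    fM M y - fM M x = log (max x (exp (-M))) - log (max y (exp (-M))) := by
  simp only [fM]
  ring

lemma mul_fM_sub_fM_le {M x y : ℝ} (hyx : y ≤ x) :
    y * (fM M y - fM M x) ≤ x - y := by
  set A := max x (exp (-M))
  set B := max y (exp (-M))
  have hB : 0 < B := lt_max_of_lt_right (exp_pos _)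
  have hBA : B ≤ A := max_le_max_right _ hyx
  have hAB : A - B ≤ x - y := by
    have := max_sub_max_le_max x (exp (-M)) y (exp (-M))
    rwa [sub_self, max_eq_left (sub_nonneg.mpr hyx)] at this
  rw [fM_sub_fM]
  calc y * (log A - log B) ≤ B * (log A - log B) :=
        mul_le_mul_of_nonneg_right (le_max_left _ _)
          (sub_nonneg.mpr (log_le_log hB hBA))
    _ ≤ A - B := mul_log_sub_log_le (hB.trans_le hBA) hB
    _ ≤ x - y := hAB

lemma div_one_sub_le_self {a r : ℝ} (ha : a ≤ 1) (hr0 : 0 ≤ r) (hr1 : r < 1) :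
    (a - r) / (1 - r) ≤ a := by
  rw [div_le_iff₀ (by linarith)]
  nlinarith

lemma sub_div_one_sub_le {a r : ℝ} (ha : 0 ≤ a) (hr0 : 0 ≤ r) (hr : r ≤ 1 / 2) :
    a - (a - r) / (1 - r) ≤ 2 * r := by
  have h : a - (a - r) / (1 - r) = r * (1 - a) / (1 - r) := by
    field_simp [show 1 - r ≠ 0 by linarith]
    ring
  rw [h, div_le_iff₀ (by linarith)]
  nlinarith [mul_nonneg hr0 ha]

theorem stmt5 :
    ∃ C > (0:ℝ), ∀ M > (0:ℝ), ∀ a ∈ Ioo (0:ℝ) 1, ∀ r ∈ Ioo (0:ℝ) (min a (1/2)),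
      (a - r) / (1 - r) * (fM M ((a - r) / (1 - r)) - fM M a) ≤ C * r := by
  refine ⟨2, two_pos, fun M _ a ha r hr ↦ ?_⟩
  obtain ⟨hr0, hr⟩ := hr
  have hr2 : r < 1 / 2 := hr.trans_le (min_le_right _ _)
  calc (a - r) / (1 - r) * (fM M ((a - r) / (1 - r)) - fM M a)
      ≤ a - (a - r) / (1 - r) :=
        mul_fM_sub_fM_le (div_one_sub_le_self ha.2.le hr0.le (by linarith))
    _ ≤ 2 * r := sub_div_one_sub_le ha.1.le hr0.le hr2.le
end

section
/- Let Λ satisfy Λ({1}) = 0, Λ((0,1)) > 0, and H(Λ) := ∫_{[0,1)} r^{−1} Λ(dr) < ∞, and let N(Λ) := inf{k ≥ 1 : λ_k(Λ) ≥ H(Λ)}. Then N(Λ) is finite and N(Λ) > max(2, √(H(Λ)/λ₂(Λ))). -/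
open Set MeasureTheory Filter

/-- `λ_k(Λ) = ∫_{(0,1)} (1-(1-r)^k - k r (1-r)^{k-1}) r^{-2} Λ(dr)`. -/
noncomputable def lamk (Λ : Measure ℝ) (k : ℕ) : ENNReal :=
  ∫⁻ r in Ioo (0:ℝ) 1,
    ENNReal.ofReal ((1 - (1 - r) ^ k - k * r * (1 - r) ^ (k - 1)) / r ^ 2) ∂Λ

/-- `H(Λ) = ∫_{[0,1)} r^{-1} Λ(dr)`. -/
noncomputable def HLam (Λ : Measure ℝ) : ENNReal :=
  ∫⁻ r in Ico (0:ℝ) 1, ENNReal.ofReal r⁻¹ ∂Λ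

/-- `N(Λ) = inf { k ≥ 1 : λ_k(Λ) ≥ H(Λ) }`. -/
noncomputable def NLam (Λ : Measure ℝ) : ℕ :=
  sInf {k : ℕ | 1 ≤ k ∧ HLam Λ ≤ lamk Λ k}

namespace Stmt11Aux

noncomputable def g (k : ℕ) (r : ℝ) : ℝ :=
  1 - (1 - r) ^ k - k * r * (1 - r) ^ (k - 1)

lemma gstep (k : ℕ) (r : ℝ) :
    g (k + 1) r - g k r = k * r ^ 2 * (1 - r) ^ (k - 1) := by
  cases k with
  | zero => simp [g]
  | succ m =>
    simp only [g, Nat.add_sub_cancel, Nat.cast_succ]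
    ring_nf

lemma gmono {r : ℝ} (h0 : 0 ≤ r) (h1 : r ≤ 1) : Monotone fun k => g k r := by
  apply monotone_nat_of_le_succ
  intro k
  have h := gstep k r
  have h2 : (0:ℝ) ≤ k * r ^ 2 * (1 - r) ^ (k - 1) := by
    have : (0:ℝ) ≤ 1 - r := by linarith
    positivity
  linarith

lemma gbound {r : ℝ} (h0 : 0 ≤ r) (h1 : r ≤ 1) (k : ℕ) :
    g k r ≤ (k : ℝ) ^ 2 / 2 * r ^ 2 := by
  induction k with
  | zero => simp [g]
  | succ m ih =>
    have h := gstep m r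
    have hp : (1 - r) ^ (m - 1) ≤ 1 := pow_le_one₀ (by linarith) (by linarith)
    have key : (m:ℝ) * r ^ 2 * (1 - r) ^ (m - 1) ≤ m * r ^ 2 := by
      have := mul_le_mul_of_nonneg_left hp (show (0:ℝ) ≤ (m:ℝ) * r ^ 2 by positivity)
      simpa [mul_comm] using this
    push_cast
    nlinarith [sq_nonneg r]

lemma gtendsto {r : ℝ} (hr : r ∈ Ioo (0:ℝ) 1) :
    Tendsto (fun k => g k r) atTop (nhds 1) := by
  obtain ⟨hr0, hr1⟩ := hr
  have hs0 : (0:ℝ) ≤ 1 - r := by linarith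
  have hs1 : 1 - r < 1 := by linarith
  have t1 : Tendsto (fun k : ℕ => (1 - r) ^ k) atTop (nhds 0) :=
    tendsto_pow_atTop_nhds_zero_of_lt_one hs0 hs1
  have t2 : Tendsto (fun k : ℕ => (k : ℝ) * r * (1 - r) ^ (k - 1)) atTop (nhds 0) := by
    have ta : Tendsto (fun n : ℕ => ((n:ℝ) * (1 - r) ^ n + (1 - r) ^ n) * r) atTop (nhds 0) := by
      have := (tendsto_self_mul_const_pow_of_lt_one hs0 hs1).add t1
      simpa using this.mul_const r
    have tb : Tendsto (fun k : ℕ => (((k - 1 : ℕ):ℝ) * (1 - r) ^ (k - 1) + (1 - r) ^ (k - 1)) * r)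
        atTop (nhds 0) := ta.comp (tendsto_sub_atTop_nat 1)
    apply tb.congr'
    filter_upwards [eventually_ge_atTop 1] with k hk
    have hc : ((k - 1 : ℕ) : ℝ) = (k : ℝ) - 1 := by push_cast [hk]; ring
    rw [hc]; ring
  have := (t1.const_sub 1).sub t2
  simp only [g]
  simpa using this

end Stmt11Aux

open Stmt11Aux in
theorem stmt11 (Λ : Measure ℝ) [IsFiniteMeasure Λ] (hne : Λ ≠ 0)
    (hsupp : Λ (Icc (0:ℝ) 1)ᶜ = 0) (h0 : Λ {(0:ℝ)} = 0) (h1 : Λ {(1:ℝ)} = 0)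
    (hpos : Λ (Ioo (0:ℝ) 1) ≠ 0) (hH : HLam Λ < ⊤) :
    {k : ℕ | 1 ≤ k ∧ HLam Λ ≤ lamk Λ k}.Nonempty ∧
    max 2 (Real.sqrt ((HLam Λ).toReal / (lamk Λ 2).toReal)) < (NLam Λ : ℝ) := by
  set μ := Λ.restrict (Ioo (0:ℝ) 1) with hμ
  have hlamk : ∀ k, lamk Λ k = ∫⁻ r, ENNReal.ofReal (g k r / r ^ 2) ∂μ := fun k => by
    simp only [lamk, g, hμ]
  -- `H` can be computed over `Ioo 0 1`
  have hIco : Λ.restrict (Ico (0:ℝ) 1) = μ := by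
    rw [hμ]
    apply Measure.restrict_congr_set
    rw [ae_eq_set]
    constructor
    · refine measure_mono_null (fun x hx => ?_) h0
      simp only [mem_diff, mem_Ico, mem_Ioo, not_and, not_lt] at hx
      have hx0 : x ≤ 0 := by
        by_contra h
        exact absurd (hx.2 (not_le.1 h)) (not_le.2 hx.1.2)
      simp [le_antisymm hx0 hx.1.1]
    · rw [show Ioo (0:ℝ) 1 \ Ico 0 1 = ∅ by
        ext x; simp only [mem_diff, mem_Ioo, mem_Ico, mem_empty_iff_false, iff_false]
        rintro ⟨⟨a, b⟩, h⟩; exact h ⟨a.le, b⟩]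
      simp
  have hHμ : HLam Λ = ∫⁻ r, ENNReal.ofReal r⁻¹ ∂μ := by
    rw [HLam, hIco]
  -- measurability facts
  have meas1 : Measurable fun r : ℝ => ENNReal.ofReal (r⁻¹ - 1) :=
    (measurable_inv.sub measurable_const).ennreal_ofReal
  have meas2 : Measurable fun r : ℝ => ENNReal.ofReal (r⁻¹ * (r⁻¹ - 1)) :=
    (measurable_inv.mul (measurable_inv.sub measurable_const)).ennreal_ofReal
  have measinv : Measurable fun r : ℝ => ENNReal.ofReal r⁻¹ :=
    measurable_inv.ennreal_ofReal
  have measF : ∀ k : ℕ, Measurable fun r : ℝ => ENNReal.ofReal (g k r / r ^ 2) := by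
    intro k
    apply Measurable.ennreal_ofReal
    apply Measurable.div
    · unfold g; fun_prop
    · fun_prop
  -- split H = Λ(Ioo 0 1) + ε₁
  have hsplitH : HLam Λ = Λ (Ioo (0:ℝ) 1) + ∫⁻ r, ENNReal.ofReal (r⁻¹ - 1) ∂μ := by
    rw [hHμ]
    have : ∫⁻ r, ENNReal.ofReal r⁻¹ ∂μ = ∫⁻ r, (1 + ENNReal.ofReal (r⁻¹ - 1)) ∂μ := by
      rw [hμ]
      refine setLIntegral_congr_fun measurableSet_Ioo (fun r hr => ?_)
      have h1r : (1:ℝ) ≤ r⁻¹ := one_le_inv_iff₀.2 ⟨hr.1, hr.2.le⟩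
      rw [show r⁻¹ = 1 + (r⁻¹ - 1) by ring, ENNReal.ofReal_add zero_le_one (by linarith)]
      simp
    rw [this, lintegral_add_left measurable_const, lintegral_one, hμ,
      Measure.restrict_apply_univ]
  -- positivity helper
  have posint : ∀ f : ℝ → ENNReal, Measurable f → (∀ r ∈ Ioo (0:ℝ) 1, f r ≠ 0) →
      0 < ∫⁻ r, f r ∂μ := by
    intro f hf hfpos
    rw [lintegral_pos_iff_support hf]
    calc (0:ENNReal) < Λ (Ioo 0 1) := hpos.bot_lt
    _ = μ (Ioo 0 1) := by rw [hμ, Measure.restrict_apply_self]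
    _ ≤ μ (Function.support f) := measure_mono fun r hr => hfpos r hr
  have hε1pos : 0 < ∫⁻ r, ENNReal.ofReal (r⁻¹ - 1) ∂μ := by
    refine posint _ meas1 fun r hr => ?_
    have : (1:ℝ) < r⁻¹ := one_lt_inv_iff₀.2 ⟨hr.1, hr.2⟩
    simp only [ne_eq, ENNReal.ofReal_eq_zero, not_le]
    linarith
  have hε2pos : 0 < ∫⁻ r, ENNReal.ofReal (r⁻¹ * (r⁻¹ - 1)) ∂μ := by
    refine posint _ meas2 fun r hr => ?_
    have h1 : (1:ℝ) < r⁻¹ := one_lt_inv_iff₀.2 ⟨hr.1, hr.2⟩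
    simp only [ne_eq, ENNReal.ofReal_eq_zero, not_le]
    nlinarith
  have hΛIoo_top : Λ (Ioo (0:ℝ) 1) ≠ ⊤ := measure_ne_top Λ _
  have hHpos : 0 < HLam Λ := by
    rw [hsplitH]
    exact lt_of_lt_of_le hpos.bot_lt le_self_add
  -- small values of λ
  have hlam2 : lamk Λ 2 = Λ (Ioo (0:ℝ) 1) := by
    rw [hlamk, hμ]
    have : ∫⁻ r in Ioo (0:ℝ) 1, ENNReal.ofReal (g 2 r / r ^ 2) ∂Λ
        = ∫⁻ _ in Ioo (0:ℝ) 1, 1 ∂Λ := by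
      refine setLIntegral_congr_fun measurableSet_Ioo (fun r hr => ?_)
      have hr0 : r ≠ 0 := ne_of_gt hr.1
      have : g 2 r / r ^ 2 = 1 := by rw [g]; field_simp; ring
      rw [this, ENNReal.ofReal_one]
    rw [this, setLIntegral_one]
  have hlam1 : lamk Λ 1 = 0 := by
    rw [hlamk]
    have : ∀ r : ℝ, g 1 r = 0 := fun r => by simp [g]
    simp [this]
  have hlam0 : lamk Λ 0 = 0 := by
    rw [hlamk]
    have : ∀ r : ℝ, g 0 r = 0 := fun r => by simp [g]
    simp [this]
  have hlam2H : lamk Λ 2 < HLam Λ := by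
    rw [hlam2, hsplitH]
    exact ENNReal.lt_add_right hΛIoo_top hε1pos.ne'
  -- the supremum of the λ's exceeds H
  have hsup : HLam Λ < ⨆ k, lamk Λ k := by
    have hmono : ∀ᵐ r ∂μ, Monotone fun k => ENNReal.ofReal (g k r / r ^ 2) := by
      rw [hμ]
      refine (ae_restrict_iff' measurableSet_Ioo).2 (ae_of_all _ fun r hr => ?_)
      intro k l hkl
      apply ENNReal.ofReal_le_ofReal
      have hr2 : (0:ℝ) < r ^ 2 := pow_pos hr.1 2
      gcongr
      exact gmono hr.1.le hr.2.le hkl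
    have hswap : ∫⁻ r, ⨆ k, ENNReal.ofReal (g k r / r ^ 2) ∂μ = ⨆ k, lamk Λ k := by
      rw [lintegral_iSup' (fun k => (measF k).aemeasurable) hmono]
      exact iSup_congr fun k => (hlamk k).symm
    have hptsup : ∀ r ∈ Ioo (0:ℝ) 1,
        (⨆ k, ENNReal.ofReal (g k r / r ^ 2))
          = ENNReal.ofReal r⁻¹ + ENNReal.ofReal (r⁻¹ * (r⁻¹ - 1)) := by
      intro r hr
      have hr2 : (0:ℝ) < r ^ 2 := pow_pos hr.1 2
      have hmonor : Monotone fun k => ENNReal.ofReal (g k r / r ^ 2) := by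
        intro k l hkl
        apply ENNReal.ofReal_le_ofReal
        gcongr
        exact gmono hr.1.le hr.2.le hkl
      have htend : Tendsto (fun k => ENNReal.ofReal (g k r / r ^ 2)) atTop
          (nhds (ENNReal.ofReal (1 / r ^ 2))) := by
        exact (ENNReal.continuous_ofReal.tendsto _).comp ((gtendsto hr).div_const _)
      rw [iSup_eq_of_tendsto hmonor htend]
      have h1r : (1:ℝ) ≤ r⁻¹ := one_le_inv_iff₀.2 ⟨hr.1, hr.2.le⟩
      have : 1 / r ^ 2 = r⁻¹ + r⁻¹ * (r⁻¹ - 1) := by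
        rw [one_div, sq, mul_inv]; ring
      rw [this, ENNReal.ofReal_add (by positivity) (by nlinarith)]
    have hcalc : ∫⁻ r, ⨆ k, ENNReal.ofReal (g k r / r ^ 2) ∂μ
        = HLam Λ + ∫⁻ r, ENNReal.ofReal (r⁻¹ * (r⁻¹ - 1)) ∂μ := by
      have : ∫⁻ r, ⨆ k, ENNReal.ofReal (g k r / r ^ 2) ∂μ
          = ∫⁻ r, (ENNReal.ofReal r⁻¹ + ENNReal.ofReal (r⁻¹ * (r⁻¹ - 1))) ∂μ := by
        rw [hμ]
        exact setLIntegral_congr_fun measurableSet_Ioo (fun r hr => hptsup r hr)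
      rw [this, lintegral_add_left measinv, ← hHμ]
    rw [← hswap, hcalc]
    exact ENNReal.lt_add_right hH.ne hε2pos.ne'
  -- nonemptiness
  obtain ⟨k, hk⟩ := lt_iSup_iff.1 hsup
  have hk1 : 1 ≤ k := by
    rcases Nat.eq_zero_or_pos k with h | h
    · rw [h, hlam0] at hk
      exact absurd hk (by simp)
    · exact h
  have hSne : {k : ℕ | 1 ≤ k ∧ HLam Λ ≤ lamk Λ k}.Nonempty := ⟨k, hk1, hk.le⟩
  refine ⟨hSne, ?_⟩
  -- N ∈ S
  obtain ⟨hN1, hNH⟩ : 1 ≤ NLam Λ ∧ HLam Λ ≤ lamk Λ (NLam Λ) := Nat.sInf_mem hSne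
  set N := NLam Λ with hNdef
  -- N ≥ 3
  have hN3 : 3 ≤ N := by
    rcases Nat.lt_or_ge N 3 with h | h
    · exfalso
      have h2 : N = 1 ∨ N = 2 := by omega
      rcases h2 with h2 | h2
      · rw [h2, hlam1] at hNH
        exact hHpos.ne' (le_antisymm hNH zero_le)
      · rw [h2] at hNH
        exact (not_le.2 hlam2H) hNH
    · exact h
  -- λ_N ≤ (N²/2) Λ(Ioo 0 1)
  have hbound : lamk Λ N ≤ ENNReal.ofReal ((N:ℝ) ^ 2 / 2) * Λ (Ioo (0:ℝ) 1) := by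
    rw [hlamk]
    calc ∫⁻ r, ENNReal.ofReal (g N r / r ^ 2) ∂μ
        ≤ ∫⁻ _, ENNReal.ofReal ((N:ℝ) ^ 2 / 2) ∂μ := by
          rw [hμ]
          refine setLIntegral_mono' measurableSet_Ioo fun r hr => ?_
          apply ENNReal.ofReal_le_ofReal
          rw [div_le_iff₀ (pow_pos hr.1 2)]
          exact gbound hr.1.le hr.2.le N
    _ = ENNReal.ofReal ((N:ℝ) ^ 2 / 2) * Λ (Ioo (0:ℝ) 1) := by
          rw [lintegral_const, hμ, Measure.restrict_apply_univ]
  -- pass to reals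
  have hl2pos : 0 < (lamk Λ 2).toReal := by
    rw [hlam2]
    exact ENNReal.toReal_pos hpos hΛIoo_top
  have hNRpos : (0:ℝ) < (N:ℝ) := by positivity
  have hHle : (HLam Λ).toReal ≤ (N:ℝ) ^ 2 / 2 * (lamk Λ 2).toReal := by
    have h2 : HLam Λ ≤ ENNReal.ofReal ((N:ℝ) ^ 2 / 2) * Λ (Ioo (0:ℝ) 1) :=
      hNH.trans hbound
    have h3 := ENNReal.toReal_mono (by
      exact ENNReal.mul_ne_top ENNReal.ofReal_ne_top hΛIoo_top) h2
    rw [ENNReal.toReal_mul, ENNReal.toReal_ofReal (by positivity)] at h3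
    rw [hlam2]
    exact h3
  have hsqrt : Real.sqrt ((HLam Λ).toReal / (lamk Λ 2).toReal) < (N:ℝ) := by
    rw [Real.sqrt_lt' hNRpos]
    rw [div_lt_iff₀ hl2pos]
    have : (N:ℝ) ^ 2 / 2 < (N:ℝ) ^ 2 := by
      have : (0:ℝ) < (N:ℝ) ^ 2 := by positivity
      linarith
    nlinarith
  have h2N : (2:ℝ) < (N:ℝ) := by
    have : (3:ℝ) ≤ (N:ℝ) := by exact_mod_cast hN3
    linarith
  exact max_lt h2N hsqrt
end

section
/- For the beta measure Λ_{a,b}(dr) = r^{a−1}(1−r)^{b−1} dr with a > 1, b > 0, and h_{Λ_{a,b}}(x) := ∫_{(0,1)} min(r, x) r^{−2} Λ_{a,b}(dr), the integrability condition ∫_{(0,1)} h_{Λ_{a,b}}(r) r^{−2} Λ_{a,b}(dr) < ∞ holds if and only if a > 3/2. -/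
open Set MeasureTheory
open Real


lemma contOn_betaK {p q : ℝ} {s : Set ℝ} (hs : ∀ x ∈ s, x ≠ 0 ∧ (1:ℝ) - x ≠ 0) :
    ContinuousOn (fun r : ℝ => r ^ p * (1 - r) ^ (q - 1)) s :=
  ContinuousOn.mul (continuousOn_id.rpow_const fun x hx => Or.inl (hs x hx).1)
    ((continuousOn_const.sub continuousOn_id).rpow_const fun x hx => Or.inl (hs x hx).2)

lemma integrableOn_betaK {p q : ℝ} (hp : -1 < p) (hq : 0 < q) :
    IntegrableOn (fun r : ℝ => r ^ p * (1 - r) ^ (q - 1)) (Ioo (0:ℝ) 1) := by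
  have hunion : Ioo (0:ℝ) 1 = Ioo 0 (1/2) ∪ Ico (1/2) 1 := by
    ext x; simp only [mem_Ioo, mem_union, mem_Ico]; constructor
    · rintro ⟨h1, h2⟩; rcases lt_or_ge x (1/2) with h | h
      · exact Or.inl ⟨h1, h⟩
      · exact Or.inr ⟨h, h2⟩
    · rintro (⟨h1, h2⟩ | ⟨h1, h2⟩) <;> constructor <;> linarith
  rw [hunion]
  apply IntegrableOn.union
  · -- near 0 : bound by M * r ^ p
    set M : ℝ := max 1 (2 ^ (1 - q)) with hM
    have hMpos : 0 < M := lt_of_lt_of_le zero_lt_one (le_max_left _ _)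
    have h1 : IntegrableOn (fun r : ℝ => r ^ p) (Ioo (0:ℝ) (1/2)) :=
      (intervalIntegral.integrableOn_Ioo_rpow_iff (by norm_num)).2 hp
    have hmeas : AEStronglyMeasurable (fun r : ℝ => r ^ p * (1 - r) ^ (q - 1))
        (volume.restrict (Ioo (0:ℝ) (1/2))) :=
      ContinuousOn.aestronglyMeasurable
        (contOn_betaK fun x hx => ⟨ne_of_gt hx.1, ne_of_gt (by linarith [hx.2])⟩)
        measurableSet_Ioo
    refine Integrable.mono (h1.const_mul M) hmeas ?_
    filter_upwards [ae_restrict_mem measurableSet_Ioo] with r hr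
    have hr0 : 0 < r := hr.1
    have hb0 : (0:ℝ) < 1 - r := by linarith [hr.2]
    have hbnd : (1 - r) ^ (q - 1) ≤ M := by
      rcases le_or_gt 1 q with h | h
      · exact le_max_of_le_left (rpow_le_one hb0.le (by linarith) (by linarith))
      · refine le_max_of_le_right ?_
        have h2 : ((2:ℝ))⁻¹ ^ (q - 1) = 2 ^ (1 - q) := by
          rw [Real.inv_rpow (by norm_num), ← Real.rpow_neg (by norm_num)]
          ring_nf
        rw [← h2]
        exact Real.rpow_le_rpow_of_nonpos (by norm_num) (by linarith [hr.2]) (by linarith)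
    have hnn : 0 ≤ r ^ p * (1 - r) ^ (q - 1) :=
      mul_nonneg (rpow_nonneg hr0.le _) (rpow_nonneg hb0.le _)
    rw [Real.norm_of_nonneg hnn,
      Real.norm_of_nonneg (mul_nonneg hMpos.le (rpow_nonneg hr0.le _))]
    calc r ^ p * (1 - r) ^ (q - 1) ≤ r ^ p * M :=
          mul_le_mul_of_nonneg_left hbnd (rpow_nonneg hr0.le _)
      _ = M * r ^ p := mul_comm _ _
  · -- near 1 : bound by M * (1-r) ^ (q-1)
    set M : ℝ := max 1 (2 ^ (-p)) with hM
    have hMpos : 0 < M := lt_of_lt_of_le zero_lt_one (le_max_left _ _)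
    have h1 : IntervalIntegrable (fun r : ℝ => r ^ (q - 1)) volume 0 (1/2) :=
      intervalIntegral.intervalIntegrable_rpow' (by linarith)
    have h2 : IntervalIntegrable (fun r : ℝ => (1 - r) ^ (q - 1)) volume (1 - 1/2) (1 - 0) :=
      (h1.comp_sub_left 1).symm
    norm_num at h2
    have h3 : IntegrableOn (fun r : ℝ => (1 - r) ^ (q - 1)) (Ioc (1/2 : ℝ) 1) := by
      rwa [intervalIntegrable_iff_integrableOn_Ioc_of_le (by norm_num)] at h2
    have h4 : IntegrableOn (fun r : ℝ => (1 - r) ^ (q - 1)) (Ico (1/2 : ℝ) 1) := by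
      rw [integrableOn_Ico_iff_integrableOn_Ioo]
      exact h3.mono_set Ioo_subset_Ioc_self
    have hmeas : AEStronglyMeasurable (fun r : ℝ => r ^ p * (1 - r) ^ (q - 1))
        (volume.restrict (Ico (1/2:ℝ) 1)) :=
      ContinuousOn.aestronglyMeasurable
        (contOn_betaK fun x hx => ⟨ne_of_gt (by linarith [hx.1] : (0:ℝ) < x),
          ne_of_gt (by linarith [hx.2])⟩)
        measurableSet_Ico
    refine Integrable.mono (h4.const_mul M) hmeas ?_
    filter_upwards [ae_restrict_mem measurableSet_Ico] with r hr
    have hrpos : (0:ℝ) < r := by linarith [hr.1]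
    have hb0 : (0:ℝ) ≤ 1 - r := by linarith [hr.2.le]
    have hbnd : r ^ p ≤ M := by
      rcases le_or_gt 0 p with h | h
      · exact le_max_of_le_left (rpow_le_one hrpos.le (by linarith [hr.2]) h)
      · refine le_max_of_le_right ?_
        have h2 : ((2:ℝ))⁻¹ ^ p = 2 ^ (-p) := by
          rw [Real.inv_rpow (by norm_num), ← Real.rpow_neg (by norm_num)]
        rw [← h2]
        exact Real.rpow_le_rpow_of_nonpos (by norm_num) (by linarith [hr.1]) h.le
    have hnn : 0 ≤ r ^ p * (1 - r) ^ (q - 1) :=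
      mul_nonneg (rpow_nonneg hrpos.le _) (rpow_nonneg hb0 _)
    rw [Real.norm_of_nonneg hnn,
      Real.norm_of_nonneg (mul_nonneg hMpos.le (rpow_nonneg hb0 _))]
    exact mul_le_mul_of_nonneg_right hbnd (rpow_nonneg hb0 _)
/-- `h_{Λ_{a,b}}(x) = ∫_{(0,1)} min(r,x) r^{-2} r^{a-1}(1-r)^{b-1} dr` for the beta
measure `Λ_{a,b}`. -/
noncomputable def hBeta (a b x : ℝ) : ℝ :=
  ∫ r in Ioo (0:ℝ) 1, (min r x / r ^ 2) * (r ^ (a - 1) * (1 - r) ^ (b - 1))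

lemma rearrangeK {r : ℝ} (hr : 0 < r) (x c a : ℝ) :
    (min r x / r ^ 2) * (r ^ (a - 1) * c) = min r x * (r ^ (a - 3) * c) := by
  have h1 : r ^ (a - 1) = r ^ (a - 3) * r ^ (2:ℕ) := by
    rw [← Real.rpow_natCast r 2, ← Real.rpow_add hr]; norm_num; congr 1; ring
  have h2 : (r:ℝ) ^ (2:ℕ) ≠ 0 := pow_ne_zero 2 hr.ne'
  rw [h1]; field_simp

lemma min_le_sqrt_mul {r x : ℝ} (hr : 0 < r) (hx : 0 < x) :
    min r x ≤ r ^ ((1:ℝ)/2) * x ^ ((1:ℝ)/2) := by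
  rcases le_total r x with h | h
  · rw [min_eq_left h]
    nth_rewrite 1 [show r = r ^ ((1:ℝ)/2) * r ^ ((1:ℝ)/2) by rw [← Real.rpow_add hr]; norm_num]
    exact mul_le_mul_of_nonneg_left (Real.rpow_le_rpow hr.le h (by norm_num)) (rpow_nonneg hr.le _)
  · rw [min_eq_right h]
    nth_rewrite 1 [show x = x ^ ((1:ℝ)/2) * x ^ ((1:ℝ)/2) by rw [← Real.rpow_add hx]; norm_num]
    exact mul_le_mul_of_nonneg_right (Real.rpow_le_rpow hx.le h (by norm_num)) (rpow_nonneg hx.le _)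

lemma innerCont {a b x : ℝ} :
    ContinuousOn (fun r : ℝ => (min r x / r ^ 2) * (r ^ (a - 1) * (1 - r) ^ (b - 1)))
      (Ioo (0:ℝ) 1) := by
  refine ContinuousOn.mul (ContinuousOn.div ((continuous_id.min continuous_const).continuousOn)
    ((continuous_pow 2).continuousOn) (fun r hr => pow_ne_zero 2 (ne_of_gt hr.1))) ?_
  exact contOn_betaK fun r hr => ⟨ne_of_gt hr.1, ne_of_gt (by linarith [hr.2])⟩

lemma innerNonneg {a b x : ℝ} (hx : 0 ≤ x) {r : ℝ} (hr : r ∈ Ioo (0:ℝ) 1) :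
    0 ≤ (min r x / r ^ 2) * (r ^ (a - 1) * (1 - r) ^ (b - 1)) :=
  mul_nonneg (div_nonneg (le_min hr.1.le hx) (by positivity))
    (mul_nonneg (rpow_nonneg hr.1.le _) (rpow_nonneg (by linarith [hr.2]) _))

lemma innerIntegrable {a b : ℝ} (ha : 1 < a) (hb : 0 < b) {x : ℝ} (hx : 0 ≤ x) :
    IntegrableOn (fun r : ℝ => (min r x / r ^ 2) * (r ^ (a - 1) * (1 - r) ^ (b - 1)))
      (Ioo (0:ℝ) 1) := by
  have hK : IntegrableOn (fun r : ℝ => r ^ (a - 2) * (1 - r) ^ (b - 1)) (Ioo (0:ℝ) 1) :=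
    integrableOn_betaK (by linarith) hb
  refine Integrable.mono hK (innerCont.aestronglyMeasurable measurableSet_Ioo) ?_
  filter_upwards [ae_restrict_mem measurableSet_Ioo] with r hr
  have hr0 : 0 < r := hr.1
  have hb0 : (0:ℝ) ≤ 1 - r := by linarith [hr.2]
  rw [Real.norm_of_nonneg (innerNonneg hx hr),
    Real.norm_of_nonneg (mul_nonneg (rpow_nonneg hr0.le _) (rpow_nonneg hb0 _))]
  rw [rearrangeK hr0]
  have h1 : r * r ^ (a - 3) = r ^ (a - 2) := by
    rw [show a - 2 = 1 + (a - 3) by ring, Real.rpow_add hr0, Real.rpow_one]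
  calc min r x * (r ^ (a - 3) * (1 - r) ^ (b - 1))
      ≤ r * (r ^ (a - 3) * (1 - r) ^ (b - 1)) :=
        mul_le_mul_of_nonneg_right (min_le_left _ _)
          (mul_nonneg (rpow_nonneg hr0.le _) (rpow_nonneg hb0 _))
    _ = r ^ (a - 2) * (1 - r) ^ (b - 1) := by rw [← mul_assoc, h1]

lemma hBeta_nonneg {a b x : ℝ} (hx : 0 ≤ x) : 0 ≤ hBeta a b x :=
  setIntegral_nonneg measurableSet_Ioo fun _ hr => innerNonneg hx hr
theorem stmt18 (a b : ℝ) (ha : 1 < a) (hb : 0 < b) :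
    (∫⁻ r in Ioo (0:ℝ) 1,
        ENNReal.ofReal ((hBeta a b r / r ^ 2) * (r ^ (a - 1) * (1 - r) ^ (b - 1)))) < ⊤
      ↔ 3 / 2 < a := by
  constructor
  · -- finiteness → 3/2 < a
    intro hfin
    by_contra hle
    push_neg at hle
    set cb : ℝ := min ((2:ℝ) ^ (1 - b)) 1 with hcbdef
    have hcb0 : 0 < cb := lt_min (rpow_pos_of_pos two_pos _) one_pos
    have hker_lb : ∀ r : ℝ, 0 < r → r ≤ 1/2 → cb ≤ (1 - r) ^ (b - 1) := by
      intro r h0 h12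
      rcases le_total 1 b with h | h
      · refine le_trans (min_le_left _ _) ?_
        have h2 : (2:ℝ) ^ (1 - b) = (2⁻¹ : ℝ) ^ (b - 1) := by
          rw [Real.inv_rpow (by norm_num), ← Real.rpow_neg (by norm_num)]; ring_nf
        rw [h2]
        exact Real.rpow_le_rpow (by norm_num) (by linarith) (by linarith)
      · refine le_trans (min_le_right _ _) ?_
        have h4 := Real.rpow_le_rpow_of_nonpos (by linarith : (0:ℝ) < 1 - r)
          (by linarith : 1 - r ≤ 1) (by linarith : b - 1 ≤ 0)
        rwa [Real.one_rpow] at h4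
    have hlb : ∀ x ∈ Ioo (0:ℝ) (1/2), cb * (x ^ (a - 2) * (x / 2)) ≤ hBeta a b x := by
      intro x hx
      have hx0 : 0 < x := hx.1
      have hInt := innerIntegrable ha hb hx0.le
      have hsub : Ioo (x/2) x ⊆ Ioo (0:ℝ) 1 := fun r hr =>
        ⟨lt_trans (by linarith) hr.1, by linarith [hr.2, hx.2]⟩
      have step1 : (∫ r in Ioo (x/2) x, (min r x / r ^ 2) * (r ^ (a-1) * (1-r) ^ (b-1)))
          ≤ hBeta a b x := by
        rw [hBeta]
        refine setIntegral_mono_set hInt ?_ (HasSubset.Subset.eventuallyLE hsub)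
        filter_upwards [ae_restrict_mem measurableSet_Ioo] with r hr
        exact innerNonneg hx0.le hr
      refine le_trans ?_ step1
      have hconst : ∀ r ∈ Ioo (x/2) x,
          cb * x ^ (a - 2) ≤ (min r x / r ^ 2) * (r ^ (a-1) * (1-r) ^ (b-1)) := by
        intro r hr
        have hr0 : 0 < r := lt_trans (by linarith) hr.1
        rw [rearrangeK hr0, min_eq_left hr.2.le, ← mul_assoc,
          show r * r ^ (a - 3) = r ^ (a - 2) by
            rw [show a - 2 = 1 + (a - 3) by ring, Real.rpow_add hr0, Real.rpow_one]]
        have h2 : x ^ (a - 2) ≤ r ^ (a - 2) :=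
          Real.rpow_le_rpow_of_nonpos hr0 hr.2.le (by linarith)
        have h3 : cb ≤ (1 - r) ^ (b - 1) := hker_lb r hr0 (by linarith [hr.2, hx.2])
        calc cb * x ^ (a - 2) = x ^ (a - 2) * cb := mul_comm _ _
          _ ≤ r ^ (a - 2) * (1 - r) ^ (b - 1) :=
            mul_le_mul h2 h3 hcb0.le (rpow_nonneg hr0.le _)
      have hmeasval : (volume (Ioo (x/2) x)).toReal = x / 2 := by
        rw [Real.volume_Ioo, ENNReal.toReal_ofReal (by linarith)]
        ring
      have hge := setIntegral_ge_of_const_le measurableSet_Ioo measure_Ioo_lt_top.ne hconst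
        (hInt.mono_set hsub)
      rw [measureReal_def, hmeasval, smul_eq_mul, mul_comm] at hge
      calc cb * (x ^ (a - 2) * (x / 2)) = cb * x ^ (a - 2) * (x / 2) := by ring
        _ ≤ _ := hge
    have houter : ∀ᵐ x ∂(volume.restrict (Ioo (0:ℝ) (1/2))),
        ENNReal.ofReal (cb * cb / 2 * x ^ (2*a - 4))
          ≤ ENNReal.ofReal ((hBeta a b x / x ^ 2) * (x ^ (a-1) * (1-x) ^ (b-1))) := by
      filter_upwards [ae_restrict_mem measurableSet_Ioo] with x hx
      apply ENNReal.ofReal_le_ofReal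
      have hx0 : 0 < x := hx.1
      have e1 : x ^ (a-2) * (x/2) = x ^ (a-1) / 2 := by
        rw [show a - 1 = (a-2) + 1 by ring, Real.rpow_add hx0, Real.rpow_one]; ring
      have h2x : (x:ℝ) ^ (2:ℕ) = x ^ ((2:ℝ)) := by
        rw [← Real.rpow_natCast x 2]; norm_num
      have e2 : x ^ (a-1) * x ^ (a-1) = x ^ (2*a - 2) := by
        rw [← Real.rpow_add hx0]; congr 1; ring
      have e3 : x ^ (2*a-2) / x ^ (2:ℕ) = x ^ (2*a - 4) := by
        rw [h2x, ← Real.rpow_sub hx0]; congr 1; ring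
      have e4 : x ^ (a-1) * x ^ (a-1) / x ^ (2:ℕ) = x ^ (2*a-4) := by rw [e2, e3]
      have eq5 : cb * (x ^ (a-2) * (x/2)) / x ^ (2:ℕ) * (x ^ (a-1) * cb)
          = cb * cb / 2 * x ^ (2*a-4) := by
        rw [← e4, e1]; ring
      rw [← eq5]
      have h3 : cb ≤ (1 - x) ^ (b - 1) := hker_lb x hx0 hx.2.le
      refine mul_le_mul ((div_le_div_iff_of_pos_right (by positivity)).mpr (hlb x hx))
        (mul_le_mul_of_nonneg_left h3 (rpow_nonneg hx0.le _))
        (by positivity)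
        (div_nonneg (hBeta_nonneg hx0.le) (by positivity))
    have hchain : (∫⁻ x in Ioo (0:ℝ) (1/2), ENNReal.ofReal (cb*cb/2 * x ^ (2*a-4)))
        ≤ ∫⁻ r in Ioo (0:ℝ) 1,
          ENNReal.ofReal ((hBeta a b r / r ^ 2) * (r ^ (a-1) * (1-r) ^ (b-1))) :=
      le_trans (lintegral_mono_ae houter)
        (lintegral_mono_set (Ioo_subset_Ioo_right (by norm_num)))
    have hne : (∫⁻ x in Ioo (0:ℝ) (1/2), ENNReal.ofReal (cb*cb/2 * x ^ (2*a-4))) ≠ ⊤ :=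
      (lt_of_le_of_lt hchain hfin).ne
    have hint : IntegrableOn (fun x : ℝ => cb*cb/2 * x ^ (2*a-4)) (Ioo (0:ℝ) (1/2)) := by
      refine (lintegral_ofReal_ne_top_iff_integrable ?_ ?_).mp hne
      · exact (continuousOn_const.mul (continuousOn_id.rpow_const
          fun x hx => Or.inl (ne_of_gt hx.1))).aestronglyMeasurable measurableSet_Ioo
      · filter_upwards [ae_restrict_mem measurableSet_Ioo] with x hx
        exact mul_nonneg (by positivity) (rpow_nonneg hx.1.le _)
    have hne0 : (cb*cb/2 : ℝ) ≠ 0 := by positivity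
    have hx' : IntegrableOn (fun x : ℝ => x ^ (2*a-4)) (Ioo (0:ℝ) (1/2)) := by
      have h := hint.const_mul ((cb*cb/2)⁻¹)
      refine h.congr ?_
      filter_upwards with x
      rw [← mul_assoc, inv_mul_cancel₀ hne0, one_mul]
    rw [intervalIntegral.integrableOn_Ioo_rpow_iff (by norm_num)] at hx'
    linarith
  · -- 3/2 < a → finiteness
    intro ha32
    set C : ℝ := ∫ r in Ioo (0:ℝ) 1, r ^ (a - 5/2) * (1 - r) ^ (b - 1) with hCdef
    have hCint : IntegrableOn (fun r : ℝ => r ^ (a - 5/2) * (1 - r) ^ (b - 1)) (Ioo (0:ℝ) 1) :=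
      integrableOn_betaK (by linarith) hb
    have hC0 : 0 ≤ C := setIntegral_nonneg measurableSet_Ioo fun r hr =>
      mul_nonneg (rpow_nonneg hr.1.le _) (rpow_nonneg (by linarith [hr.2]) _)
    have hub : ∀ x ∈ Ioo (0:ℝ) 1, hBeta a b x ≤ x ^ ((1:ℝ)/2) * C := by
      intro x hx
      have hx0 : 0 < x := hx.1
      rw [hBeta, hCdef, ← integral_const_mul]
      refine integral_mono_of_nonneg ?_ (hCint.const_mul _) ?_
      · filter_upwards [ae_restrict_mem measurableSet_Ioo] with r hr
        exact innerNonneg hx0.le hr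
      · filter_upwards [ae_restrict_mem measurableSet_Ioo] with r hr
        have hr0 : 0 < r := hr.1
        have hb0 : (0:ℝ) ≤ 1 - r := by linarith [hr.2]
        rw [rearrangeK hr0]
        have hmin := min_le_sqrt_mul hr0 hx0
        have e1 : r ^ ((1:ℝ)/2) * r ^ (a - 3) = r ^ (a - 5/2) := by
          rw [← Real.rpow_add hr0]; congr 1; ring
        calc min r x * (r ^ (a-3) * (1-r) ^ (b-1))
            ≤ (r ^ ((1:ℝ)/2) * x ^ ((1:ℝ)/2)) * (r ^ (a-3) * (1-r) ^ (b-1)) :=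
              mul_le_mul_of_nonneg_right hmin
                (mul_nonneg (rpow_nonneg hr0.le _) (rpow_nonneg hb0 _))
          _ = x ^ ((1:ℝ)/2) * (r ^ (a - 5/2) * (1-r) ^ (b-1)) := by rw [← e1]; ring
    have hmono : ∀ᵐ x ∂(volume.restrict (Ioo (0:ℝ) 1)),
        ENNReal.ofReal ((hBeta a b x / x ^ 2) * (x ^ (a-1) * (1-x) ^ (b-1)))
          ≤ ENNReal.ofReal (C * (x ^ (a - 5/2) * (1-x) ^ (b-1))) := by
      filter_upwards [ae_restrict_mem measurableSet_Ioo] with x hx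
      apply ENNReal.ofReal_le_ofReal
      have hx0 : 0 < x := hx.1
      have hb0 : (0:ℝ) ≤ 1 - x := by linarith [hx.2]
      have h2x : (x:ℝ) ^ (2:ℕ) = x ^ ((2:ℝ)) := by rw [← Real.rpow_natCast x 2]; norm_num
      have e4 : x ^ ((1:ℝ)/2) * C / x ^ (2:ℕ) * (x ^ (a-1) * (1-x) ^ (b-1))
          = C * (x ^ (a - 5/2) * (1-x) ^ (b-1)) := by
        have e5 : x ^ ((1:ℝ)/2) / x ^ (2:ℕ) * x ^ (a-1) = x ^ (a - 5/2) := by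
          rw [h2x, div_eq_mul_inv, ← Real.rpow_neg hx0.le, ← Real.rpow_add hx0,
            ← Real.rpow_add hx0]
          congr 1; ring
        rw [← e5]; ring
      rw [← e4]
      exact mul_le_mul_of_nonneg_right
        ((div_le_div_iff_of_pos_right (by positivity)).mpr (hub x hx))
        (mul_nonneg (rpow_nonneg hx0.le _) (rpow_nonneg hb0 _))
    refine lt_of_le_of_lt (lintegral_mono_ae hmono) ?_
    rw [lt_top_iff_ne_top]
    refine (lintegral_ofReal_ne_top_iff_integrable ?_ ?_).mpr (hCint.const_mul C)
    · exact (continuousOn_const.mul (contOn_betaK fun x hx =>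
        ⟨ne_of_gt hx.1, ne_of_gt (by linarith [hx.2])⟩)).aestronglyMeasurable measurableSet_Ioo
    · filter_upwards [ae_restrict_mem measurableSet_Ioo] with x hx
      exact mul_nonneg hC0
        (mul_nonneg (rpow_nonneg hx.1.le _) (rpow_nonneg (by linarith [hx.2]) _))
end
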